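/- Let A →(i_*) B →(j^*) C be an exact triple of triangulated categories with duality, with the self-dual t-structure on B glued from self-dual t-structures on A and C, and hearts A⁰, B⁰, C⁰. If β : b → Db is an anisotropic symmetric form in B⁰ and γ : c → Dc is an anisotropic symmetric form in C⁰, then the intermediate restriction i^{!*}β (a form in A⁰) and the intermediate extension j_{!*}γ (a form in B⁰) are also anisotropic. -/

import Mathlib

open CategoryTheory CategoryTheory.Limits

universe v u v₁ u₁ v₂ u₂ v₃ u₃

/-- A (contravariant) duality on a preadditive category: a triple `(D, χ)` where `D` is an
additive contravariant endofunctor and `χ : id → D ∘ D^op` is a natural isomorphism such that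
`D χ_a ∘ χ_{D a} = id`. -/
structure PreDuality (A : Type u) [Category.{v} A] [Preadditive A] where
  obj : A → A
  map : ∀ {X Y : A}, (X ⟶ Y) → (obj Y ⟶ obj X)
  map_id : ∀ X : A, map (𝟙 X) = 𝟙 (obj X)
  map_comp : ∀ {X Y Z : A} (f : X ⟶ Y) (g : Y ⟶ Z), map (f ≫ g) = map g ≫ map f
  map_add : ∀ {X Y : A} (f g : X ⟶ Y), map (f + g) = map f + map g
  χ : ∀ X : A, X ⟶ obj (obj X)
  χ_iso : ∀ X : A, IsIso (χ X)
  χ_natural : ∀ {X Y : A} (f : X ⟶ Y), f ≫ χ Y = χ X ≫ map (map f)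
  triangle : ∀ X : A, χ (obj X) ≫ map (χ X) = 𝟙 (obj X)

namespace PreDuality

variable {A : Type u} [Category.{v} A] [Preadditive A] (𝒟 : PreDuality A)

lemma map_zero (X Y : A) : 𝒟.map (0 : X ⟶ Y) = 0 := by
  have h := 𝒟.map_add (0 : X ⟶ Y) 0
  rw [add_zero] at h
  exact (add_eq_left).mp h.symm

lemma map_neg {X Y : A} (f : X ⟶ Y) : 𝒟.map (-f) = -𝒟.map f := by
  have h := 𝒟.map_add f (-f)
  rw [add_neg_cancel, 𝒟.map_zero] at h
  exact eq_neg_of_add_eq_zero_right h.symm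

/-- The "opposite-sign" duality `(D, -χ)`; its symmetric forms are the antisymmetric forms
for `(D, χ)`. -/
def neg : PreDuality A where
  obj := 𝒟.obj
  map := 𝒟.map
  map_id := 𝒟.map_id
  map_comp := 𝒟.map_comp
  map_add := 𝒟.map_add
  χ X := -𝒟.χ X
  χ_iso X := by
    have := 𝒟.χ_iso X
    exact ⟨⟨-(inv (𝒟.χ X)), by simp, by simp⟩⟩
  χ_natural f := by
    rw [Preadditive.comp_neg, Preadditive.neg_comp, 𝒟.χ_natural]
  triangle X := by
    try dsimp only
    rw [𝒟.map_neg, Preadditive.neg_comp, Preadditive.comp_neg, neg_neg, 𝒟.triangle]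

end PreDuality

section Forms

variable {A : Type u} [Category.{v} A] [Preadditive A]

/-- A symmetric bilinear form in a category with duality: a morphism `β : b ⟶ D b`
with `β = D β ∘ χ_b`.  (Antisymmetric forms are symmetric forms for `𝒟.neg`.) -/
structure SymmForm (𝒟 : PreDuality A) where
  carrier : A
  form : carrier ⟶ 𝒟.obj carrier
  symm : form = 𝒟.χ carrier ≫ 𝒟.map form

namespace SymmForm

variable {𝒟 : PreDuality A}

/-- A form is non-degenerate if the underlying morphism is an isomorphism. -/
def Nondeg (β : SymmForm 𝒟) : Prop := IsIso β.form

/-- The restriction `β|_f = D f ∘ β ∘ f` of a symmetric form along a morphism `f`. -/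
def restrict (β : SymmForm 𝒟) {a : A} (f : a ⟶ β.carrier) : SymmForm 𝒟 where
  carrier := a
  form := f ≫ β.form ≫ 𝒟.map f
  symm := by
    have h : 𝒟.map (f ≫ β.form ≫ 𝒟.map f)
        = 𝒟.map (𝒟.map f) ≫ 𝒟.map β.form ≫ 𝒟.map f := by
      rw [𝒟.map_comp, 𝒟.map_comp, Category.assoc]
    rw [h, ← Category.assoc (𝒟.χ a), ← 𝒟.χ_natural f, Category.assoc,
      ← Category.assoc (𝒟.χ β.carrier), ← β.symm]

lemma restrict_symm (β : SymmForm 𝒟) {a : A} (f : a ⟶ β.carrier) :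
    f ≫ β.form ≫ 𝒟.map f = 𝒟.χ a ≫ 𝒟.map (f ≫ β.form ≫ 𝒟.map f) :=
  (β.restrict f).symm

/-- Orthogonal direct sum of symmetric forms. -/
noncomputable def orthSum [HasBinaryBiproducts A] (β₁ β₂ : SymmForm 𝒟) : SymmForm 𝒟 where
  carrier := β₁.carrier ⊞ β₂.carrier
  form := biprod.desc (β₁.form ≫ 𝒟.map biprod.fst) (β₂.form ≫ 𝒟.map biprod.snd)
  symm := by
    apply biprod.hom_ext'
    · rw [biprod.inl_desc]
      have h1 : biprod.inl ≫ 𝒟.χ (β₁.carrier ⊞ β₂.carrier)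
          = 𝒟.χ β₁.carrier ≫ 𝒟.map (𝒟.map (biprod.inl : β₁.carrier ⟶ _)) :=
        𝒟.χ_natural _
      rw [← Category.assoc, h1, Category.assoc, ← 𝒟.map_comp]
      have h2 : biprod.desc (β₁.form ≫ 𝒟.map biprod.fst) (β₂.form ≫ 𝒟.map biprod.snd) ≫
          𝒟.map (biprod.inl : β₁.carrier ⟶ _) = biprod.fst ≫ β₁.form := by
        apply biprod.hom_ext'
        · rw [← Category.assoc, biprod.inl_desc, Category.assoc, ← 𝒟.map_comp,
            biprod.inl_fst, 𝒟.map_id, Category.comp_id, ← Category.assoc, biprod.inl_fst,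
            Category.id_comp]
        · rw [← Category.assoc, biprod.inr_desc, Category.assoc, ← 𝒟.map_comp,
            biprod.inl_snd, 𝒟.map_zero, Limits.comp_zero, ← Category.assoc, biprod.inr_fst,
            Limits.zero_comp]
      rw [h2, 𝒟.map_comp, ← Category.assoc, ← β₁.symm]
    · rw [biprod.inr_desc]
      have h1 : biprod.inr ≫ 𝒟.χ (β₁.carrier ⊞ β₂.carrier)
          = 𝒟.χ β₂.carrier ≫ 𝒟.map (𝒟.map (biprod.inr : β₂.carrier ⟶ _)) :=
        𝒟.χ_natural _
      rw [← Category.assoc, h1, Category.assoc, ← 𝒟.map_comp]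
      have h2 : biprod.desc (β₁.form ≫ 𝒟.map biprod.fst) (β₂.form ≫ 𝒟.map biprod.snd) ≫
          𝒟.map (biprod.inr : β₂.carrier ⟶ _) = biprod.snd ≫ β₂.form := by
        apply biprod.hom_ext'
        · rw [← Category.assoc, biprod.inl_desc, Category.assoc, ← 𝒟.map_comp,
            biprod.inr_fst, 𝒟.map_zero, Limits.comp_zero, ← Category.assoc, biprod.inl_snd,
            Limits.zero_comp]
        · rw [← Category.assoc, biprod.inr_desc, Category.assoc, ← 𝒟.map_comp,
            biprod.inr_snd, 𝒟.map_id, Category.comp_id, ← Category.assoc, biprod.inr_snd,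
            Category.id_comp]
      rw [h2, 𝒟.map_comp, ← Category.assoc, ← β₂.symm]

end SymmForm

/-- Two symmetric forms are isometric if they correspond under an isomorphism of the
underlying objects. -/
def Isometric' {𝒟 : PreDuality A} (α β : SymmForm 𝒟) : Prop :=
  ∃ f : α.carrier ⟶ β.carrier, IsIso f ∧ α.form = f ≫ β.form ≫ 𝒟.map f

/-- A subobject (given by a monomorphism `i`) is isotropic for `β` if `β|_i = 0`. -/
def IsIsotropic {𝒟 : PreDuality A} (β : SymmForm 𝒟) {a : A} (i : a ⟶ β.carrier) : Prop :=
  Mono i ∧ i ≫ β.form ≫ 𝒟.map i = 0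

/-- A symmetric form is anisotropic if it has no non-zero isotropic subobject. -/
def Anisotropic {𝒟 : PreDuality A} (β : SymmForm 𝒟) : Prop :=
  ∀ (a : A) (i : a ⟶ β.carrier), Mono i → i ≫ β.form ≫ 𝒟.map i = 0 → IsZero a

end Forms

section AbelianDuality

variable {A : Type u} [Category.{v} A] [Abelian A]

/-- An exact duality on an abelian category: a duality whose underlying additive
contravariant functor is exact, i.e. takes cokernels to kernels and kernels to cokernels. -/
structure Duality (A : Type u) [Category.{v} A] [Abelian A] extends PreDuality A where
  dualCokernelIsKernel : ∀ {X Y : A} (f : X ⟶ Y),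
    IsLimit (KernelFork.ofι (f := toPreDuality.map f) (toPreDuality.map (cokernel.π f))
      (by rw [← toPreDuality.map_comp, cokernel.condition, toPreDuality.map_zero]))
  dualKernelIsCokernel : ∀ {X Y : A} (f : X ⟶ Y),
    IsColimit (CokernelCofork.ofπ (f := toPreDuality.map f) (toPreDuality.map (kernel.ι f))
      (by rw [← toPreDuality.map_comp, kernel.condition, toPreDuality.map_zero]))

/-- Abbreviation for the underlying duality data. -/
abbrev Duality.P (𝒟 : Duality A) : PreDuality A := 𝒟.toPreDuality

/-- The negative `(D, -χ)` of an exact duality. -/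
def Duality.neg (𝒟 : Duality A) : Duality A where
  toPreDuality := 𝒟.toPreDuality.neg
  dualCokernelIsKernel := 𝒟.dualCokernelIsKernel
  dualKernelIsCokernel := 𝒟.dualKernelIsCokernel

namespace SymmForm

variable {𝒟 : Duality A} (β : SymmForm 𝒟.P) {a : A} (i : a ⟶ β.carrier)
  (hiso : i ≫ β.form ≫ 𝒟.P.map i = 0)

/-- The factorisation of an isotropic `i : a ⟶ b` through the orthogonal complement
`a^⊥ = ker (D i ∘ β)`. -/
noncomputable def perpLift : a ⟶ kernel (β.form ≫ 𝒟.P.map i) :=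
  kernel.lift _ i hiso

lemma reduce_h1 :
    perpLift β i hiso ≫ (kernel.ι (β.form ≫ 𝒟.P.map i) ≫ β.form ≫
      𝒟.P.map (kernel.ι (β.form ≫ 𝒟.P.map i))) = 0 := by
  have hpcι : perpLift β i hiso ≫ kernel.ι (β.form ≫ 𝒟.P.map i) = i := kernel.lift_ι _ _ _
  have e1 : i ≫ β.form = 𝒟.P.χ a ≫ 𝒟.P.map (β.form ≫ 𝒟.P.map i) := by
    conv_lhs => rw [β.symm]
    rw [← Category.assoc, 𝒟.P.χ_natural i, Category.assoc, ← 𝒟.P.map_comp]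
  rw [← Category.assoc, hpcι, ← Category.assoc, e1, Category.assoc, ← 𝒟.P.map_comp,
    kernel.condition, 𝒟.P.map_zero, Limits.comp_zero]

/-- The degenerate form `β` restricted to `a^⊥`, descended to `a^⊥/a`. -/
noncomputable def reducePre :
    cokernel (perpLift β i hiso) ⟶
      𝒟.P.obj (kernel (β.form ≫ 𝒟.P.map i)) :=
  cokernel.desc _ _ (reduce_h1 β i hiso)

lemma perpLift_ι :
    perpLift β i hiso ≫ kernel.ι (β.form ≫ 𝒟.P.map i) = i :=
  kernel.lift_ι _ _ _

lemma reduce_h2 :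
    reducePre β i hiso ≫ 𝒟.P.map (perpLift β i hiso) = 0 := by
  rw [← cancel_epi (cokernel.π (perpLift β i hiso)), Limits.comp_zero, ← Category.assoc,
    reducePre, cokernel.π_desc, Category.assoc, Category.assoc, ← 𝒟.P.map_comp,
    perpLift_ι]
  exact kernel.condition _

/-- Isotropic reduction `β/a` of a symmetric form along an isotropic morphism `i : a ⟶ b`:
the induced symmetric form on `a^⊥/a`, where `a^⊥ = ker (D i ∘ β)`. -/
noncomputable def reduce : SymmForm 𝒟.P where
  carrier := cokernel (perpLift β i hiso)
  form := (KernelFork.IsLimit.lift' (𝒟.dualCokernelIsKernel (perpLift β i hiso))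
    (reducePre β i hiso) (reduce_h2 β i hiso)).1
  symm := by
    set φv := (KernelFork.IsLimit.lift' (𝒟.dualCokernelIsKernel (perpLift β i hiso))
      (reducePre β i hiso) (reduce_h2 β i hiso)).1 with hv
    have hφ : φv ≫ 𝒟.P.map (cokernel.π (perpLift β i hiso)) = reducePre β i hiso :=
      (KernelFork.IsLimit.lift' (𝒟.dualCokernelIsKernel (perpLift β i hiso))
        (reducePre β i hiso) (reduce_h2 β i hiso)).2
    have hπs : cokernel.π (perpLift β i hiso) ≫ reducePre β i hiso
        = kernel.ι (β.form ≫ 𝒟.P.map i) ≫ β.form ≫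
            𝒟.P.map (kernel.ι (β.form ≫ 𝒟.P.map i)) :=
      cokernel.π_desc _ _ _
    apply Fork.IsLimit.hom_ext (𝒟.dualCokernelIsKernel (perpLift β i hiso))
    show φv ≫ 𝒟.P.map (cokernel.π (perpLift β i hiso)) =
        (𝒟.P.χ _ ≫ 𝒟.P.map φv) ≫ 𝒟.P.map (cokernel.π (perpLift β i hiso))
    have key : 𝒟.P.map (𝒟.P.map (cokernel.π (perpLift β i hiso))) ≫ 𝒟.P.map φv ≫
        𝒟.P.map (cokernel.π (perpLift β i hiso))
        = 𝒟.P.map (kernel.ι (β.form ≫ 𝒟.P.map i) ≫ β.form ≫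
            𝒟.P.map (kernel.ι (β.form ≫ 𝒟.P.map i))) := by
      rw [← 𝒟.P.map_comp, ← 𝒟.P.map_comp, Category.assoc, hφ, hπs]
    rw [hφ, ← cancel_epi (cokernel.π (perpLift β i hiso)), hπs, Category.assoc,
      ← Category.assoc (cokernel.π (perpLift β i hiso)) (𝒟.P.χ _),
      𝒟.P.χ_natural (cokernel.π (perpLift β i hiso)), Category.assoc, key]
    exact β.restrict_symm _

/-- Reduction of a symmetric form by the kernel: the induced non-degenerate form on the
image of `β`. -/
noncomputable def reduceKernel : SymmForm 𝒟.P :=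
  β.reduce (kernel.ι β.form) (by rw [← Category.assoc, kernel.condition, Limits.zero_comp])

lemma form_comp_map_kernel : β.form ≫ 𝒟.P.map (kernel.ι β.form) = 0 := by
  have h := congrArg (fun g => 𝒟.P.χ β.carrier ≫ 𝒟.P.map g) (kernel.condition β.form)
  simp only [𝒟.P.map_comp, 𝒟.P.map_zero, Limits.comp_zero] at h
  rw [← Category.assoc, ← β.symm] at h
  exact h

/-- The canonical quotient map `b ⟶ im β` onto (the reduction model of) the image of `β`. -/
noncomputable def kerQuot : β.carrier ⟶ β.reduceKernel.carrier :=
  kernel.lift _ (𝟙 _) (by rw [Category.id_comp]; exact β.form_comp_map_kernel) ≫ cokernel.π _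

end SymmForm

end AbelianDuality

section Witt

variable {A : Type u} [Category.{v} A] [Preadditive A]

/-- A lagrangian of a symmetric form: an isotropic subobject `i : a ⟶ b` such that
`0 ⟶ a ⟶ b ⟶ D a ⟶ 0` (with second map `D i ∘ β`) is short exact. -/
def SymmForm.IsLagrangian [Abelian A] {𝒟 : PreDuality A} (β : SymmForm 𝒟) {a : A}
    (i : a ⟶ β.carrier) : Prop :=
  Mono i ∧ Epi (β.form ≫ 𝒟.map i) ∧
    ∃ w : i ≫ (β.form ≫ 𝒟.map i) = 0,
      (CategoryTheory.ShortComplex.mk i (β.form ≫ 𝒟.map i) w).Exact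

/-- A metabolic form: a non-degenerate symmetric form admitting a lagrangian. -/
def SymmForm.Metabolic [Abelian A] {𝒟 : PreDuality A} (β : SymmForm 𝒟) : Prop :=
  IsIso β.form ∧ ∃ (a : A) (i : a ⟶ β.carrier), β.IsLagrangian i

/-- Witt equivalence with respect to a class `M` of "metabolic" forms: stable isometry. -/
def WittEquivBy [HasBinaryBiproducts A] {𝒟 : PreDuality A} (M : SymmForm 𝒟 → Prop)
    (β₁ β₂ : SymmForm 𝒟) : Prop :=
  ∃ η₁ η₂ : SymmForm 𝒟, M η₁ ∧ M η₂ ∧ Isometric' (β₁.orthSum η₁) (β₂.orthSum η₂)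


variable (𝒟 : PreDuality A)

/-- Non-degenerate symmetric forms with carrier in a given class `P` of objects. -/
abbrev NDForm (P : A → Prop) : Type (max u v) :=
  {β : SymmForm 𝒟 // IsIso β.form ∧ P β.carrier}

/-- The subgroup of relations defining the Witt group: `[β₁ ⊕ β₂] = [β₁] + [β₂]` and
`[η] = 0` for `η` metabolic. -/
def wittRel [HasBinaryBiproducts A] (M : SymmForm 𝒟 → Prop) (P : A → Prop) :
    AddSubgroup (FreeAbelianGroup (NDForm 𝒟 P)) :=
  AddSubgroup.closure
    ({x | ∃ (β₁ β₂ : NDForm 𝒟 P) (h : IsIso (β₁.1.orthSum β₂.1).form)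
        (hP : P (β₁.1.orthSum β₂.1).carrier),
        x = FreeAbelianGroup.of (⟨β₁.1.orthSum β₂.1, h, hP⟩ : NDForm 𝒟 P)
          - FreeAbelianGroup.of β₁ - FreeAbelianGroup.of β₂} ∪
     {x | ∃ (β₁ β₂ : NDForm 𝒟 P), Isometric' β₁.1 β₂.1 ∧
        x = FreeAbelianGroup.of β₁ - FreeAbelianGroup.of β₂} ∪
     {x | ∃ η : NDForm 𝒟 P, M η.1 ∧ x = FreeAbelianGroup.of η})

/-- The Witt group of non-degenerate symmetric forms (with carrier in `P`), modulo metabolic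
forms `M`, presented as the quotient of the free abelian group on non-degenerate symmetric
forms by the sum, isometry and metabolic relations. -/
def WittGroup [HasBinaryBiproducts A] (M : SymmForm 𝒟 → Prop) (P : A → Prop) :
    Type (max u v) :=
  FreeAbelianGroup (NDForm 𝒟 P) ⧸ wittRel 𝒟 M P

noncomputable instance [HasBinaryBiproducts A] (M : SymmForm 𝒟 → Prop) (P : A → Prop) :
    AddCommGroup (WittGroup 𝒟 M P) :=
  inferInstanceAs (AddCommGroup (FreeAbelianGroup (NDForm 𝒟 P) ⧸ wittRel 𝒟 M P))

/-- The Witt class of a non-degenerate symmetric form. -/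
def wittClsP [HasBinaryBiproducts A] (M : SymmForm 𝒟 → Prop) (P : A → Prop)
    (β : SymmForm 𝒟) (h : IsIso β.form) (hP : P β.carrier) : WittGroup 𝒟 M P :=
  QuotientAddGroup.mk (FreeAbelianGroup.of (⟨β, h, hP⟩ : NDForm 𝒟 P))

end Witt

section AWitt

variable {A : Type u} [Category.{v} A] [Abelian A]

/-- Witt equivalence of symmetric forms in an abelian category: stable isometry by
metabolic forms. -/
def WittEquiv {𝒟 : PreDuality A} (β₁ β₂ : SymmForm 𝒟) : Prop :=
  WittEquivBy SymmForm.Metabolic β₁ β₂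

/-- The Witt group `W(𝒜)` of an abelian category with duality. -/
def AWitt (𝒟 : Duality A) : Type (max u v) :=
  WittGroup 𝒟.P SymmForm.Metabolic (fun _ => True)

noncomputable instance (𝒟 : Duality A) : AddCommGroup (AWitt 𝒟) :=
  inferInstanceAs (AddCommGroup (WittGroup 𝒟.P SymmForm.Metabolic (fun _ => True)))

/-- The Witt class `[β] ∈ W(𝒜)` of a non-degenerate symmetric form. -/
def aCls (𝒟 : Duality A) (β : SymmForm 𝒟.P) (h : IsIso β.form) : AWitt 𝒟 :=
  wittClsP 𝒟.P SymmForm.Metabolic (fun _ => True) β h trivial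

/-- The Witt group `W₋(𝒜)` of antisymmetric forms. -/
def AWittNeg (𝒟 : Duality A) : Type (max u v) := AWitt 𝒟.neg

noncomputable instance (𝒟 : Duality A) : AddCommGroup (AWittNeg 𝒟) :=
  inferInstanceAs (AddCommGroup (AWitt 𝒟.neg))

end AWitt

section DualityFunctor

variable {A : Type u} {B : Type u₁} [Category.{v} A] [Category.{v₁} B]
  [Preadditive A] [Preadditive B]

/-- An additive functor commuting with dualities. -/
structure DualityFunctor (𝒟₁ : PreDuality A) (𝒟₂ : PreDuality B) where
  F : A ⥤ B
  additive : F.Additive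
  η : ∀ X : A, F.obj (𝒟₁.obj X) ≅ 𝒟₂.obj (F.obj X)
  η_natural : ∀ {X Y : A} (f : X ⟶ Y),
    F.map (𝒟₁.map f) ≫ (η X).hom = (η Y).hom ≫ 𝒟₂.map (F.map f)
  χ_compat : ∀ X : A,
    F.map (𝒟₁.χ X) ≫ (η (𝒟₁.obj X)).hom ≫ 𝒟₂.map ((η X).inv) = 𝒟₂.χ (F.obj X)

namespace DualityFunctor

variable {𝒟₁ : PreDuality A} {𝒟₂ : PreDuality B} (Φ : DualityFunctor 𝒟₁ 𝒟₂)

/-- The image of a symmetric form under a functor commuting with dualities. -/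
def mapForm (β : SymmForm 𝒟₁) : SymmForm 𝒟₂ where
  carrier := Φ.F.obj β.carrier
  form := Φ.F.map β.form ≫ (Φ.η β.carrier).hom
  symm := by
    have h0 : 𝒟₂.map (Φ.F.map β.form ≫ (Φ.η β.carrier).hom)
        = 𝒟₂.map (Φ.η β.carrier).hom ≫ 𝒟₂.map (Φ.F.map β.form) := 𝒟₂.map_comp _ _
    rw [h0, ← Φ.χ_compat β.carrier, Category.assoc, Category.assoc]
    have h1 : 𝒟₂.map ((Φ.η β.carrier).inv) ≫ 𝒟₂.map ((Φ.η β.carrier).hom) = 𝟙 _ := by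
      rw [← 𝒟₂.map_comp, Iso.hom_inv_id, 𝒟₂.map_id]
    rw [← Category.assoc (𝒟₂.map ((Φ.η β.carrier).inv)), h1, Category.id_comp,
      ← Φ.η_natural β.form, ← Category.assoc, ← Φ.F.map_comp, ← β.symm]

lemma mapForm_nondeg (β : SymmForm 𝒟₁) (h : IsIso β.form) : IsIso (Φ.mapForm β).form := by
  have : IsIso (Φ.F.map β.form) := by have := h; exact Functor.map_isIso _ _
  show IsIso (Φ.F.map β.form ≫ (Φ.η β.carrier).hom)
  infer_instance

end DualityFunctor

end DualityFunctor

section DFMore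

variable {A : Type u} {B : Type u₁} {C : Type u₂} [Category.{v} A] [Category.{v₁} B]
  [Category.{v₂} C] [Preadditive A] [Preadditive B] [Preadditive C]

/-- The identity duality functor. -/
def DualityFunctor.id (𝒟 : PreDuality A) : DualityFunctor 𝒟 𝒟 where
  F := 𝟭 A
  additive := inferInstance
  η X := Iso.refl _
  η_natural f := by simp
  χ_compat X := by simp [𝒟.map_id]

/-- Composition of duality functors. -/
def DualityFunctor.comp {𝒟₁ : PreDuality A} {𝒟₂ : PreDuality B} {𝒟₃ : PreDuality C}
    (Φ : DualityFunctor 𝒟₁ 𝒟₂) (Ψ : DualityFunctor 𝒟₂ 𝒟₃) : DualityFunctor 𝒟₁ 𝒟₃ where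
  F := Φ.F ⋙ Ψ.F
  additive := by
    have := Φ.additive
    have := Ψ.additive
    exact Functor.instAdditiveComp _ _
  η X := Ψ.F.mapIso (Φ.η X) ≪≫ Ψ.η (Φ.F.obj X)
  η_natural {X Y} f := by
    dsimp
    rw [← Category.assoc, ← Ψ.F.map_comp, Φ.η_natural f, Ψ.F.map_comp, Category.assoc,
      Ψ.η_natural (Φ.F.map f), ← Category.assoc]
  χ_compat X := by
    dsimp
    have h1 := Ψ.η_natural ((Φ.η X).inv)
    have h2 : 𝒟₃.map ((Ψ.η (Φ.F.obj X)).inv ≫ Ψ.F.map ((Φ.η X).inv))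
        = 𝒟₃.map (Ψ.F.map ((Φ.η X).inv)) ≫ 𝒟₃.map ((Ψ.η (Φ.F.obj X)).inv) :=
      𝒟₃.map_comp _ _
    rw [h2]
    simp only [Category.assoc]
    rw [← Category.assoc ((Ψ.η (Φ.F.obj (𝒟₁.obj X))).hom), ← h1]
    simp only [Category.assoc]
    slice_lhs 1 3 => rw [← Ψ.F.map_comp, ← Ψ.F.map_comp]
    rw [Φ.χ_compat X]
    simp only [Category.assoc]
    exact Ψ.χ_compat (Φ.F.obj X)

/-- A duality functor between the negated dualities. -/
def DualityFunctor.negD {𝒟₁ : PreDuality A} {𝒟₂ : PreDuality B}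
    (Φ : DualityFunctor 𝒟₁ 𝒟₂) : DualityFunctor 𝒟₁.neg 𝒟₂.neg where
  F := Φ.F
  additive := Φ.additive
  η := Φ.η
  η_natural := Φ.η_natural
  χ_compat X := by
    have := Φ.additive
    show Φ.F.map (-𝒟₁.χ X) ≫ (Φ.η _).hom ≫ 𝒟₂.map ((Φ.η X).inv) = -𝒟₂.χ (Φ.F.obj X)
    rw [Functor.map_neg, Preadditive.neg_comp, Φ.χ_compat X]

end DFMore

section Misc

open ZeroObject

variable {A : Type u} [Category.{v} A] [Abelian A]

/-- The zero form on the zero object. -/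
noncomputable def zeroForm (𝒟 : PreDuality A) : SymmForm 𝒟 where
  carrier := 0
  form := 0
  symm := by rw [𝒟.map_zero, Limits.comp_zero]

/-- Orthogonal direct sum of a finite list of symmetric forms. -/
noncomputable def orthSumList (𝒟 : PreDuality A) (l : List (SymmForm 𝒟)) : SymmForm 𝒟 :=
  l.foldr SymmForm.orthSum (zeroForm 𝒟)

/-- A Serre class in an abelian category: closed under isomorphisms, subobjects, quotients
and extensions, and containing the zero objects. -/
structure SerreClass (A : Type u) [Category.{v} A] [Abelian A] where
  P : A → Prop
  prop_of_iso : ∀ {X Y : A}, (X ≅ Y) → P X → P Y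
  prop_zero : ∀ X : A, IsZero X → P X
  prop_sub : ∀ {X Y : A} (f : X ⟶ Y), Mono f → P Y → P X
  prop_quot : ∀ {X Y : A} (f : X ⟶ Y), Epi f → P X → P Y
  prop_ext : ∀ {X Y Z : A} (f : X ⟶ Y) (g : Y ⟶ Z) (w : f ≫ g = 0), Mono f → Epi g →
    (CategoryTheory.ShortComplex.mk f g w).Exact → P X → P Z → P Y

/-- The smallest Serre class containing a given object `s`: "the full Serre subcategory
`⟨s⟩` generated by `s`". -/
def serreGen (s : A) : A → Prop := fun x => ∀ C : SerreClass A, C.P s → C.P x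

/-- Self-dual simple objects `s ≅ D s`. -/
abbrev SelfDualSimple (𝒟 : Duality A) : Type u :=
  {s : A // Simple s ∧ Nonempty (s ≅ 𝒟.obj s)}

instance sdSetoid (𝒟 : Duality A) : Setoid (SelfDualSimple 𝒟) where
  r s t := Nonempty (s.1 ≅ t.1)
  iseqv := ⟨fun _ => ⟨Iso.refl _⟩, fun ⟨e⟩ => ⟨e.symm⟩, fun ⟨e⟩ ⟨f⟩ => ⟨e.trans f⟩⟩

/-- Isomorphism classes of self-dual simple objects. -/
def SDIndex (𝒟 : Duality A) : Type u := Quotient (sdSetoid 𝒟)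

/-- The Witt group `W(⟨s⟩)` of the full Serre subcategory generated by `s`. -/
def SubWitt (𝒟 : Duality A) (s : A) : Type (max u v) :=
  WittGroup 𝒟.P SymmForm.Metabolic (serreGen s)

noncomputable instance (𝒟 : Duality A) (s : A) : AddCommGroup (SubWitt 𝒟 s) :=
  inferInstanceAs (AddCommGroup (WittGroup 𝒟.P SymmForm.Metabolic (serreGen s)))

/-- The Witt class in `W(⟨s⟩)`. -/
def subCls (𝒟 : Duality A) (s : A) (β : SymmForm 𝒟.P) (h : IsIso β.form)
    (hP : serreGen s β.carrier) : SubWitt 𝒟 s :=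
  wittClsP 𝒟.P SymmForm.Metabolic (serreGen s) β h hP

/-- A noetherian abelian category: every object satisfies the ascending chain condition
on subobjects. -/
def NoethCat (A : Type u) [Category.{v} A] : Prop :=
  ∀ X : A, WellFounded ((· > ·) : Subobject X → Subobject X → Prop)

end Misc
section Recollement

variable (A₀ : Type u₁) (B₀ : Type u₂) (C₀ : Type u₃)
  [Category.{v₁} A₀] [Category.{v₂} B₀] [Category.{v₃} C₀]
  [Abelian A₀] [Abelian B₀] [Abelian C₀]
  (DA : Duality A₀) (DB : Duality B₀) (DC : Duality C₀)

/-- Gluing (recollement) data for abelian hearts, as obtained from an exact triple of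
triangulated categories with duality `A → B → C` with a self-dual `t`-structure on `B`
glued from self-dual `t`-structures on `A` and `C`: the six functors
`i_* ⊣ ᵖi^! , ᵖi^* ⊣ i_*, ᵖj_! ⊣ j^*, j^* ⊣ ᵖj_*` on the hearts, the two exact sequences,
the compatibilities with the dualities, and the natural transformations
`ᵖi^! → ᵖi^*` and `ᵖj_! → ᵖj_*` defining intermediate restriction and extension. -/
structure ARecollement where
  /-- the (fully faithful, exact, duality-commuting) inclusion `i_* : A⁰ → B⁰` -/
  i : DualityFunctor DA.P DB.P
  /-- the (exact, duality-commuting) quotient functor `j^* : B⁰ → C⁰` -/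
  jq : DualityFunctor DB.P DC.P
  /-- `ᵖi^*` -/
  iL : B₀ ⥤ A₀
  /-- `ᵖi^!` -/
  iR : B₀ ⥤ A₀
  /-- `ᵖj_!` -/
  jL : C₀ ⥤ B₀
  /-- `ᵖj_*` -/
  jR : C₀ ⥤ B₀
  adj1 : iL ⊣ i.F
  adj2 : i.F ⊣ iR
  adj3 : jL ⊣ jq.F
  adj4 : jq.F ⊣ jR
  iFull : i.F.Full
  iFaithful : i.F.Faithful
  jLFull : jL.Full
  jLFaithful : jL.Faithful
  jRFull : jR.Full
  jRFaithful : jR.Faithful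
  iExactL : PreservesFiniteLimits i.F
  iExactR : PreservesFiniteColimits i.F
  jqExactL : PreservesFiniteLimits jq.F
  jqExactR : PreservesFiniteColimits jq.F
  /-- `j^* i_* = 0` -/
  ji_zero : ∀ a : A₀, IsZero (jq.F.obj (i.F.obj a))
  /-- objects killed by `j^*` come from `A⁰` -/
  ji_ker : ∀ b : B₀, IsZero (jq.F.obj b) → ∃ a : A₀, Nonempty (i.F.obj a ≅ b)
  /-- the exact sequence `0 → i_* ᵖi^! → id → ᵖj_* j^*` -/
  seq1_w : ∀ b : B₀, adj2.counit.app b ≫ adj4.unit.app b = 0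
  seq1_mono : ∀ b : B₀, Mono (adj2.counit.app b)
  seq1_exact : ∀ b : B₀,
    (CategoryTheory.ShortComplex.mk _ _ (seq1_w b)).Exact
  /-- the exact sequence `ᵖj_! j^* → id → i_* ᵖi^* → 0` -/
  seq2_w : ∀ b : B₀, adj3.counit.app b ≫ adj1.unit.app b = 0
  seq2_epi : ∀ b : B₀, Epi (adj1.unit.app b)
  seq2_exact : ∀ b : B₀,
    (CategoryTheory.ShortComplex.mk _ _ (seq2_w b)).Exact
  /-- the natural transformation `ᵖi^! → ᵖi^*` -/
  ν : iR ⟶ iL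
  /-- the natural transformation `ᵖj_! → ᵖj_*` -/
  μ : jL ⟶ jR
  /-- duality exchanges `ᵖi^!` and `ᵖi^*` -/
  ξ : ∀ b : B₀, iR.obj (DB.obj b) ≅ DA.obj (iL.obj b)
  ξ_natural : ∀ {b b' : B₀} (f : b ⟶ b'),
    iR.map (DB.P.map f) ≫ (ξ b).hom = (ξ b').hom ≫ DA.P.map (iL.map f)
  /-- duality exchanges `ᵖj_!` and `ᵖj_*` -/
  ζ : ∀ c : C₀, jL.obj (DC.obj c) ≅ DB.obj (jR.obj c)
  ζ_natural : ∀ {c c' : C₀} (f : c ⟶ c'),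
    jL.map (DC.P.map f) ≫ (ζ c).hom = (ζ c').hom ≫ DB.P.map (jR.map f)
  /-- for a symmetric form `β` on `b`, the induced (possibly degenerate) form on `ᵖi^! b`
  is symmetric -/
  restrSymm : ∀ β : SymmForm DB.P,
    (iR.map β.form ≫ (ξ β.carrier).hom ≫ DA.P.map (ν.app β.carrier)) =
      DA.P.χ _ ≫ DA.P.map
        (iR.map β.form ≫ (ξ β.carrier).hom ≫ DA.P.map (ν.app β.carrier))
  /-- for a symmetric form `γ` on `c`, the induced (possibly degenerate) form on `ᵖj_! c`
  is symmetric -/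
  extSymm : ∀ γ : SymmForm DC.P,
    (jL.map γ.form ≫ (ζ γ.carrier).hom ≫ DB.P.map (μ.app γ.carrier)) =
      DB.P.χ _ ≫ DB.P.map
        (jL.map γ.form ≫ (ζ γ.carrier).hom ≫ DB.P.map (μ.app γ.carrier))

namespace ARecollement

variable {A₀ B₀ C₀ DA DB DC} (R : ARecollement A₀ B₀ C₀ DA DB DC)

/-- The (possibly degenerate) symmetric form induced on `ᵖi^! b` by a symmetric form on
`b`. -/
def restrForm (β : SymmForm DB.P) : SymmForm DA.P where
  carrier := R.iR.obj β.carrier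
  form := R.iR.map β.form ≫ (R.ξ β.carrier).hom ≫ DA.P.map (R.ν.app β.carrier)
  symm := R.restrSymm β

/-- The intermediate restriction `i^{!*} β`: the induced non-degenerate symmetric form on
`im (ᵖi^! b → ᵖi^* b)`. -/
noncomputable def interRestr (β : SymmForm DB.P) : SymmForm DA.P :=
  (R.restrForm β).reduceKernel

/-- The (possibly degenerate) symmetric form induced on `ᵖj_! c` by a symmetric form on
`c`. -/
def extForm (γ : SymmForm DC.P) : SymmForm DB.P where
  carrier := R.jL.obj γ.carrier
  form := R.jL.map γ.form ≫ (R.ζ γ.carrier).hom ≫ DB.P.map (R.μ.app γ.carrier)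
  symm := R.extSymm γ

/-- The intermediate extension `j_{!*} γ`: the induced non-degenerate symmetric form on
`im (ᵖj_! c → ᵖj_* c)`. -/
noncomputable def interExt (γ : SymmForm DC.P) : SymmForm DB.P :=
  (R.extForm γ).reduceKernel

end ARecollement

end Recollement

/-!
An anisotropic form is non-degenerate, and so is its restriction `β|_p` to any subobject `p`.
Both `ᵖi^!` and `ᵖj_!` come with a natural comparison `w : G ∘ D ⟶ D ∘ G` (built from `ξ, ν`,
resp. `ζ, μ`), and the induced form on `G b` is `G β ≫ w`. If an isotropic subobject of it is
`G p` for a subobject `p : y ⟶ b`, isotropy says that `w_y` kills the isomorphism `G (β|_p)`; so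
`w_y = 0`, hence `w_{D y} = 0` by naturality along `β|_p`, and by symmetry of `β` this forces
`G p ≫ G β ≫ w = 0`. For `ᵖi^!` every subobject is of this form by adjunction; for `ᵖj_!` this
holds after applying `j^*`, which detects maps out of `ᵖj_! c`. So every isotropic subobject of
the induced form lies in its radical, and its reduction by the radical is anisotropic.
-/

attribute [instance] PreDuality.χ_iso

namespace PreDuality

variable {A : Type u} [Category.{v} A] [Preadditive A] (𝒟 : PreDuality A)

instance isIso_map {X Y : A} (f : X ⟶ Y) [IsIso f] : IsIso (𝒟.map f) :=
  ⟨⟨𝒟.map (inv f), by rw [← 𝒟.map_comp, IsIso.inv_hom_id, 𝒟.map_id],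
    by rw [← 𝒟.map_comp, IsIso.hom_inv_id, 𝒟.map_id]⟩⟩

lemma isZero_obj {X : A} (hX : IsZero X) : IsZero (𝒟.obj X) := by
  rw [IsZero.iff_id_eq_zero, ← 𝒟.map_id, hX.eq_of_src (𝟙 X) 0, 𝒟.map_zero]

end PreDuality

lemma Duality.epi_map_of_mono {A : Type u} [Category.{v} A] [Abelian A] (𝒟 : Duality A)
    {X Y : A} (f : X ⟶ Y) [Mono f] : Epi (𝒟.P.map f) :=
  Preadditive.epi_of_isZero_cokernel' _ (𝒟.dualKernelIsCokernel f)
    (𝒟.P.isZero_obj (isZero_kernel_of_mono f))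

namespace SymmForm

variable {A : Type u} [Category.{v} A] [Preadditive A] {𝒟 : PreDuality A} (β : SymmForm 𝒟)

lemma comp_form {x : A} (u : x ⟶ β.carrier) :
    u ≫ β.form = 𝒟.χ x ≫ 𝒟.map (β.form ≫ 𝒟.map u) := by
  conv_lhs => rw [β.symm]
  rw [← Category.assoc, 𝒟.χ_natural u, Category.assoc, ← 𝒟.map_comp]

lemma form_comp_map {x : A} (u : x ⟶ β.carrier) :
    β.form ≫ 𝒟.map u = 𝒟.χ β.carrier ≫ 𝒟.map (u ≫ β.form) := by
  conv_lhs => rw [β.symm]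
  rw [𝒟.map_comp, Category.assoc]

end SymmForm

section Anisotropic

variable {A : Type u} [Category.{v} A]

lemma Anisotropic.restrict [Preadditive A] {𝒟 : PreDuality A} {β : SymmForm 𝒟}
    (hβ : Anisotropic β) {a : A} (m : a ⟶ β.carrier) [Mono m] : Anisotropic (β.restrict m) := by
  intro z (v : z ⟶ a) hv hiso
  refine hβ z (v ≫ m) (@mono_comp _ _ _ _ _ v hv m _) ?_
  change v ≫ (m ≫ β.form ≫ 𝒟.map m) ≫ 𝒟.map v = 0 at hiso
  simpa only [𝒟.map_comp, Category.assoc] using hiso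

lemma Anisotropic.mono_form [Abelian A] {𝒟 : PreDuality A} {β : SymmForm 𝒟}
    (hβ : Anisotropic β) : Mono β.form :=
  Preadditive.mono_of_isZero_kernel _ <|
    hβ _ (kernel.ι β.form) inferInstance (by rw [kernel.condition_assoc, zero_comp])

lemma SymmForm.isIso_form_of_mono [Abelian A] {𝒟 : Duality A} (β : SymmForm 𝒟.P)
    [Mono β.form] : IsIso β.form := by
  have : Epi (inv (𝒟.P.χ β.carrier) ≫ β.form) := by
    rw [← (IsIso.eq_inv_comp _).2 β.symm.symm]
    exact 𝒟.epi_map_of_mono β.form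
  have : Epi β.form := epi_of_epi (inv (𝒟.P.χ β.carrier)) β.form
  exact isIso_of_mono_of_epi β.form

lemma Anisotropic.isIso_form [Abelian A] {𝒟 : Duality A} {β : SymmForm 𝒟.P}
    (hβ : Anisotropic β) : IsIso β.form :=
  have := hβ.mono_form
  β.isIso_form_of_mono

end Anisotropic

namespace SymmForm

variable {A : Type u} [Category.{v} A] [Abelian A] {𝒟 : Duality A} (β : SymmForm 𝒟.P)

lemma π_reduce_form_map_π {a : A} (i : a ⟶ β.carrier) (hiso : i ≫ β.form ≫ 𝒟.P.map i = 0) :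
    cokernel.π (perpLift β i hiso) ≫ (β.reduce i hiso).form ≫
        𝒟.P.map (cokernel.π (perpLift β i hiso)) =
      kernel.ι (β.form ≫ 𝒟.P.map i) ≫ β.form ≫ 𝒟.P.map (kernel.ι (β.form ≫ 𝒟.P.map i)) := by
  rw [← cokernel.π_desc (perpLift β i hiso) _ (reduce_h1 β i hiso)]
  exact congrArg (cokernel.π _ ≫ ·)
    (KernelFork.IsLimit.lift' (𝒟.dualCokernelIsKernel (perpLift β i hiso))
      (reducePre β i hiso) (reduce_h2 β i hiso)).2

lemma anisotropic_of_subquotient (δ : SymmForm 𝒟.P) {k : A} (ι : k ⟶ β.carrier)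
    (π : k ⟶ δ.carrier) [hπ : Epi π] (hδ : π ≫ δ.form ≫ 𝒟.P.map π = ι ≫ β.form ≫ 𝒟.P.map ι)
    (hiso : ∀ (x : A) (v : x ⟶ k), Mono v → (v ≫ ι) ≫ β.form ≫ 𝒟.P.map (v ≫ ι) = 0 →
      v ≫ π = 0) :
    Anisotropic δ := by
  intro a m hm hm_iso
  have hv : (pullback.snd m π ≫ ι) ≫ β.form ≫ 𝒟.P.map (pullback.snd m π ≫ ι) = 0 :=
    calc (pullback.snd m π ≫ ι) ≫ β.form ≫ 𝒟.P.map (pullback.snd m π ≫ ι)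
        = pullback.snd m π ≫ (π ≫ δ.form ≫ 𝒟.P.map π) ≫ 𝒟.P.map (pullback.snd m π) := by
          rw [hδ, 𝒟.P.map_comp]; simp only [Category.assoc]
      _ = pullback.fst m π ≫ (m ≫ δ.form ≫ 𝒟.P.map m) ≫ 𝒟.P.map (pullback.fst m π) := by
          simp only [← Category.assoc, ← pullback.condition]
          simp only [Category.assoc, ← 𝒟.P.map_comp, pullback.condition]
      _ = 0 := by rw [hm_iso, zero_comp, comp_zero]
  have hm0 : m = 0 := by
    rw [← cancel_epi (pullback.fst m π), pullback.condition, comp_zero]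
    exact hiso _ _ inferInstance hv
  exact IsZero.of_mono_eq_zero m hm0

lemma anisotropic_reduceKernel
    (hrad : ∀ (x : A) (u : x ⟶ β.carrier), Mono u → u ≫ β.form ≫ 𝒟.P.map u = 0 →
      u ≫ β.form = 0) :
    Anisotropic β.reduceKernel := by
  have hker : kernel.ι β.form ≫ β.form ≫ 𝒟.P.map (kernel.ι β.form) = 0 := by
    rw [kernel.condition_assoc, zero_comp]
  refine β.anisotropic_of_subquotient _ (kernel.ι (β.form ≫ 𝒟.P.map (kernel.ι β.form)))
    (cokernel.π (perpLift β (kernel.ι β.form) hker)) (hπ := coequalizer.π_epi)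
    (β.π_reduce_form_map_π _ hker) ?_
  intro x v _ hv
  have hfactor : v = kernel.lift β.form _ (hrad x _ inferInstance hv) ≫ perpLift β _ hker := by
    rw [← cancel_mono (kernel.ι _), Category.assoc, perpLift_ι, kernel.lift_ι]
  change v ≫ cokernel.π (perpLift β (kernel.ι β.form) hker) = 0
  rw [hfactor, Category.assoc, cokernel.condition, comp_zero]

end SymmForm

structure LaxDualityFunctor {A : Type u} {B : Type u₁} [Category.{v} A] [Category.{v₁} B]
    [Preadditive A] [Preadditive B] (𝒟₁ : PreDuality A) (𝒟₂ : PreDuality B) where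
  F : A ⥤ B
  w : ∀ X : A, F.obj (𝒟₁.obj X) ⟶ 𝒟₂.obj (F.obj X)
  w_natural : ∀ {X Y : A} (f : X ⟶ Y), F.map (𝒟₁.map f) ≫ w X = w Y ≫ 𝒟₂.map (F.map f)

namespace LaxDualityFunctor

open Preadditive

section

variable {A : Type u} {B : Type u₁} {C : Type u₂} [Category.{v} A] [Category.{v₁} B]
  [Category.{v₂} C] [Preadditive A] [Preadditive B] [Preadditive C]
  {𝒟₁ : PreDuality A} {𝒟₂ : PreDuality B} {𝒟₃ : PreDuality C}

def compDualityFunctor (Φ : LaxDualityFunctor 𝒟₁ 𝒟₂) (Ψ : DualityFunctor 𝒟₂ 𝒟₃) :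
    LaxDualityFunctor 𝒟₁ 𝒟₃ where
  F := Φ.F ⋙ Ψ.F
  w X := Ψ.F.map (Φ.w X) ≫ (Ψ.η (Φ.F.obj X)).hom
  w_natural f := by
    simp only [Functor.comp_map, ← Ψ.F.map_comp_assoc, Φ.w_natural, Functor.map_comp,
      Category.assoc, Ψ.η_natural]

end

variable {A : Type u} {B : Type u₁} [Category.{v} A] [Category.{v₁} B] [Preadditive A]
  [Abelian B] {𝒟 : PreDuality A} {ℰ : Duality B} (Φ : LaxDualityFunctor ℰ.P 𝒟)

lemma comp_map_form_eq_zero_of_isotropic {β : SymmForm ℰ.P} (hβ : Anisotropic β) {x : A} {y : B}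
    (e : x ≅ Φ.F.obj y) (p : y ⟶ β.carrier) [Mono p]
    (hiso : (e.hom ≫ Φ.F.map p) ≫ (Φ.F.map β.form ≫ Φ.w β.carrier) ≫
      𝒟.map (e.hom ≫ Φ.F.map p) = 0) :
    (e.hom ≫ Φ.F.map p) ≫ Φ.F.map β.form ≫ Φ.w β.carrier = 0 := by
  have hα : IsIso (p ≫ β.form ≫ ℰ.P.map p) := (hβ.restrict p).isIso_form
  -- `w` kills the non-degenerate form `β|_p`, hence vanishes at `y` and, by naturality, at `D y`
  have hwy : Φ.w y = 0 := by
    have : e.hom ≫ (Φ.F.map (p ≫ β.form ≫ ℰ.P.map p) ≫ Φ.w y) ≫ 𝒟.map e.hom = 0 := by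
      simpa only [Functor.map_comp, 𝒟.map_comp, Category.assoc, reassoc_of% (Φ.w_natural p)]
        using hiso
    rwa [IsIso.comp_left_eq_zero, IsIso.comp_right_eq_zero, IsIso.comp_left_eq_zero] at this
  have hwDy : Φ.w (ℰ.obj y) = 0 := by
    have := Φ.w_natural (p ≫ β.form ≫ ℰ.P.map p)
    rwa [hwy, comp_zero, eq_comm, IsIso.comp_right_eq_zero] at this
  rw [Category.assoc, ← Φ.F.map_comp_assoc, β.comp_form, Φ.F.map_comp, Category.assoc,
    Φ.w_natural, hwDy, zero_comp, comp_zero, comp_zero]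

end LaxDualityFunctor

lemma DualityFunctor.map_map_eq_zero {A : Type u} {B : Type u₁} [Category.{v} A]
    [Category.{v₁} B] [Preadditive A] [Preadditive B] {𝒟₁ : PreDuality A} {𝒟₂ : PreDuality B}
    (Φ : DualityFunctor 𝒟₁ 𝒟₂) {X Y : A} {f : X ⟶ Y} (hf : Φ.F.map f = 0) :
    Φ.F.map (𝒟₁.map f) = 0 := by
  rw [← Preadditive.IsIso.comp_right_eq_zero _ (Φ.η X).hom, Φ.η_natural, hf, 𝒟₂.map_zero,
    comp_zero]

lemma CategoryTheory.Adjunction.eq_zero_of_map_eq_zero {C : Type u} {D : Type u₁} [Category.{v} C]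
    [Category.{v₁} D] [Preadditive C] [Preadditive D] {L : C ⥤ D} {G : D ⥤ C}
    [G.PreservesZeroMorphisms] (adj : L ⊣ G) {c : C} {z : D} {f : L.obj c ⟶ z}
    (hf : G.map f = 0) : f = 0 :=
  (adj.homEquiv c z).injective (by simp [Adjunction.homEquiv_unit, hf])

namespace ARecollement

variable {A₀ : Type u₁} {B₀ : Type u₂} {C₀ : Type u₃}
  [Category.{v₁} A₀] [Category.{v₂} B₀] [Category.{v₃} C₀]
  [Abelian A₀] [Abelian B₀] [Abelian C₀]
  {DA : Duality A₀} {DB : Duality B₀} {DC : Duality C₀}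
  (R : ARecollement A₀ B₀ C₀ DA DB DC)

abbrev iRLax : LaxDualityFunctor DB.P DA.P where
  F := R.iR
  w b := (R.ξ b).hom ≫ DA.P.map (R.ν.app b)
  w_natural f := by
    rw [reassoc_of% R.ξ_natural f, ← DA.P.map_comp, ← R.ν.naturality f, DA.P.map_comp,
      Category.assoc]

abbrev jLLax : LaxDualityFunctor DC.P DB.P where
  F := R.jL
  w c := (R.ζ c).hom ≫ DB.P.map (R.μ.app c)
  w_natural f := by
    rw [reassoc_of% R.ζ_natural f, ← DB.P.map_comp, ← R.μ.naturality f, DB.P.map_comp,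
      Category.assoc]

lemma comp_restrForm_eq_zero_of_isotropic {β : SymmForm DB.P} (hβ : Anisotropic β) {x : A₀}
    (u : x ⟶ R.iR.obj β.carrier) [hu : Mono u]
    (hiso : u ≫ (R.iR.map β.form ≫ R.iRLax.w β.carrier) ≫ DA.P.map u = 0) :
    u ≫ R.iR.map β.form ≫ R.iRLax.w β.carrier = 0 := by
  have := R.iFull
  have := R.iFaithful
  have := R.iExactL
  have := R.seq1_mono β.carrier
  have hu_eq : u = R.adj2.unit.app x ≫ R.iR.map (R.i.F.map u ≫ R.adj2.counit.app β.carrier) := by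
    simp
  rw [hu_eq] at hiso ⊢
  exact R.iRLax.comp_map_form_eq_zero_of_isotropic hβ (asIso (R.adj2.unit.app x)) _ hiso

lemma comp_extForm_eq_zero_of_isotropic {γ : SymmForm DC.P} (hγ : Anisotropic γ) {x : B₀}
    (u : x ⟶ R.jL.obj γ.carrier) [hu : Mono u]
    (hiso : u ≫ (R.jL.map γ.form ≫ R.jLLax.w γ.carrier) ≫ DB.P.map u = 0) :
    u ≫ R.jL.map γ.form ≫ R.jLLax.w γ.carrier = 0 := by
  have := R.jLFull
  have := R.jLFaithful
  have := R.jqExactL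
  have := R.jq.additive
  let θ : SymmForm DB.P := ⟨R.jL.obj γ.carrier, _, R.extSymm γ⟩
  -- apply `j^*`, under which `ᵖj_!` becomes the identity, then transpose back along `ᵖj_! ⊣ j^*`
  have hjq_u : R.adj3.unit.app (R.jq.F.obj x) ≫
      R.jq.F.map (R.jL.map (R.jq.F.map u ≫ inv (R.adj3.unit.app γ.carrier))) = R.jq.F.map u := by
    simp
  have hjq : R.jq.F.map (u ≫ θ.form) = 0 := by
    have := (R.jLLax.compDualityFunctor R.jq).comp_map_form_eq_zero_of_isotropic hγ
      (asIso (R.adj3.unit.app (R.jq.F.obj x)) :) (R.jq.F.map u ≫ inv (R.adj3.unit.app γ.carrier))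
    simp only [LaxDualityFunctor.compDualityFunctor, Functor.comp_map, asIso_hom, hjq_u] at this
    rw [← Preadditive.IsIso.comp_right_eq_zero _ (R.jq.η _).hom]
    simp only [θ, Functor.map_comp, Category.assoc] at this ⊢
    refine this ?_
    have h := congrArg (fun f ↦ R.jq.F.map f ≫ (R.jq.η x).hom) hiso
    simp only [Functor.map_comp, Functor.map_zero, zero_comp, Category.assoc, R.jq.η_natural] at h
    simpa only [Functor.map_comp, Category.assoc] using h
  have hθ : θ.form ≫ DB.P.map u = 0 := by
    refine R.adj3.eq_zero_of_map_eq_zero ?_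
    rw [θ.form_comp_map u, Functor.map_comp, R.jq.map_map_eq_zero hjq, comp_zero]
  rw [θ.comp_form u, hθ, DB.P.map_zero, comp_zero]

end ARecollement

theorem stmt_14 {A₀ : Type u₁} {B₀ : Type u₂} {C₀ : Type u₃}
    [Category.{v₁} A₀] [Category.{v₂} B₀] [Category.{v₃} C₀]
    [Abelian A₀] [Abelian B₀] [Abelian C₀]
    (DA : Duality A₀) (DB : Duality B₀) (DC : Duality C₀)
    (R : ARecollement A₀ B₀ C₀ DA DB DC)
    (β : SymmForm DB.P) (hβ : Anisotropic β)
    (γ : SymmForm DC.P) (hγ : Anisotropic γ) :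
    Anisotropic (R.interRestr β) ∧ Anisotropic (R.interExt γ) :=
  ⟨(R.restrForm β).anisotropic_reduceKernel fun _ u hu ↦
      R.comp_restrForm_eq_zero_of_isotropic hβ u (hu := hu),
    (R.extForm γ).anisotropic_reduceKernel fun _ u hu ↦
      R.comp_extForm_eq_zero_of_isotropic hγ u (hu := hu)⟩
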